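/- arXiv:2306.13309 — 4 statements merged into one kernel-verified Lean document; each statement's English description precedes it below -/
import Mathlib

section
/- For any partition λ in the set EO-bar (partitions where every even part is less than each odd part, and only the largest even part, if any, appears an odd number of times), the conjugate partition λ' is also in EO-bar, and the even-odd crank of λ (the largest even part of λ minus the number of odd parts of λ) equals the number of odd parts of λ' minus the number of odd parts of λ. -/
open Finset PowerSeries

/-- The largest even part of a partition (as multiset), 0 if none. -/
noncomputable def largestEven (s : Multiset ℕ) : ℕ := sSup {a | a ∈ s ∧ Even a}

/-- The largest odd part, 0 if none. -/
noncomputable def largestOdd (s : Multiset ℕ) : ℕ := sSup {a | a ∈ s ∧ Odd a}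

/-- The smallest odd part, 0 if none. -/
noncomputable def smallestOdd (s : Multiset ℕ) : ℕ := sInf {a | a ∈ s ∧ Odd a}

/-- The number of odd parts. -/
def oddParts (s : Multiset ℕ) : ℕ := (s.filter (fun a => Odd a)).card

/-- The number of even parts. -/
def evenParts (s : Multiset ℕ) : ℕ := (s.filter (fun a => Even a)).card

/-- The conjugate partition: the i-th part (i = 1, …, max) of the conjugate is
the number of parts of `s` that are ≥ i. -/
noncomputable def conjugate (s : Multiset ℕ) : Multiset ℕ :=
  (Multiset.range (sSup {a | a ∈ s})).map fun i => (s.filter fun p => i < p).card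

/-- Andrews' even-odd crank: largest even part minus number of odd parts. -/
noncomputable def eoc (s : Multiset ℕ) : ℤ := (largestEven s : ℤ) - oddParts s

/-- The Stanley rank: number of odd parts minus number of odd parts of the conjugate. -/
noncomputable def srank (s : Multiset ℕ) : ℤ := (oddParts s : ℤ) - oddParts (conjugate s)

/-- Membership in EO-bar: every even part is less than each odd part, and a part appears an
odd number of times exactly when it is the largest even part. -/
noncomputable def EObar (s : Multiset ℕ) : Prop :=
  (∀ a ∈ s, ∀ b ∈ s, Even a → Odd b → a < b) ∧
  ∀ a ∈ s, (Odd (s.count a) ↔ a = largestEven s)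

/-- EO²: every even part below each odd part, an odd part exists, and exactly the smallest
odd part appears an odd number of times. -/
noncomputable def EO2 (s : Multiset ℕ) : Prop :=
  (∀ a ∈ s, ∀ b ∈ s, Even a → Odd b → a < b) ∧ (∃ a ∈ s, Odd a) ∧
  ∀ a ∈ s, (Odd (s.count a) ↔ a = smallestOdd s)

/-- EO³: nonempty, all parts odd, and exactly the largest part appears an odd number of times. -/
noncomputable def EO3 (s : Multiset ℕ) : Prop :=
  s ≠ 0 ∧ (∀ a ∈ s, Odd a) ∧
  ∀ a ∈ s, (Odd (s.count a) ↔ a = sSup {b | b ∈ s})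

/-- OE-bar: each odd part below each even part, both parities occur, and a part appears an
odd number of times exactly when it is the largest odd part or the largest even part. -/
noncomputable def OEbar (s : Multiset ℕ) : Prop :=
  (∀ a ∈ s, ∀ b ∈ s, Odd a → Even b → a < b) ∧
  (∃ a ∈ s, Odd a) ∧ (∃ a ∈ s, Even a) ∧
  ∀ a ∈ s, (Odd (s.count a) ↔ (a = largestOdd s ∨ a = largestEven s))

/-- The number of partitions of `n` in EO-bar. -/
noncomputable def EObarCount (n : ℕ) : ℕ := {p : Nat.Partition n | EObar p.parts}.ncard

noncomputable def EO2Count (n : ℕ) : ℕ := {p : Nat.Partition n | EO2 p.parts}.ncard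
noncomputable def EO3Count (n : ℕ) : ℕ := {p : Nat.Partition n | EO3 p.parts}.ncard
noncomputable def OEbarCount (n : ℕ) : ℕ := {p : Nat.Partition n | OEbar p.parts}.ncard

/-- Number of partitions of `N` in EO-bar with even-odd crank ≡ k (mod m). -/
noncomputable def Neo (k m N : ℕ) : ℕ :=
  {p : Nat.Partition N | EObar p.parts ∧ eoc p.parts ≡ (k : ℤ) [ZMOD (m : ℤ)]}.ncard

/-- Total number of odd parts among partitions of `N` in EO-bar with even-odd crank ≡ k (mod m). -/
noncomputable def NTeo (k m N : ℕ) : ℕ :=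
  ∑ᶠ p ∈ {p : Nat.Partition N | EObar p.parts ∧ eoc p.parts ≡ (k : ℤ) [ZMOD (m : ℤ)]},
    oddParts p.parts

/-- Product (pi-type) topology on formal power series, with coefficientwise convergence. -/
noncomputable instance powerSeriesTopology (R : Type*) [TopologicalSpace R] :
    TopologicalSpace (PowerSeries R) :=
  inferInstanceAs (TopologicalSpace ((Unit →₀ ℕ) → R))

instance : TopologicalSpace (LaurentPolynomial ℤ) := ⊥

private lemma lowerSet_mem_iff (T : Finset ℕ) (h : ∀ i j : ℕ, i ≤ j → j ∈ T → i ∈ T) (i : ℕ) :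
    i ∈ T ↔ i < T.card := by
  constructor
  · intro hi
    have hsub : Finset.range (i + 1) ⊆ T := fun j hj =>
      h j i (Nat.lt_succ_iff.mp (Finset.mem_range.mp hj)) hi
    have := Finset.card_le_card hsub
    simpa using this
  · intro hi
    by_contra hni
    have hsub : T ⊆ Finset.range i := by
      intro j hj
      rw [Finset.mem_range]
      by_contra hji
      exact hni (h i j (le_of_not_gt hji) hj)
    have := Finset.card_le_card hsub
    simp only [Finset.card_range] at this
    omega

private lemma card_filter_mono (s : Multiset ℕ) (A B : ℕ → Prop) [DecidablePred A]
    [DecidablePred B] (h : ∀ a ∈ s, A a → B a) :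
    Multiset.card (s.filter A) ≤ Multiset.card (s.filter B) := by
  have h1 : (s.filter A).filter B = s.filter A :=
    Multiset.filter_eq_self.2 fun a ha =>
      h a (Multiset.mem_of_mem_filter ha) (Multiset.of_mem_filter ha)
  calc Multiset.card (s.filter A) = Multiset.card ((s.filter A).filter B) := by rw [h1]
    _ ≤ Multiset.card (s.filter B) :=
        Multiset.card_le_card (Multiset.filter_le_filter B (Multiset.filter_le A s))

private lemma even_card_of_counts (m : Multiset ℕ) (h : ∀ a ∈ m, Even (m.count a)) :
    Even (Multiset.card m) := by
  rw [← Multiset.toFinset_sum_count_eq]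
  exact Finset.even_sum _ fun a ha => h a (Multiset.mem_toFinset.mp ha)

private lemma card_eq_count_add (m : Multiset ℕ) (e : ℕ) :
    Multiset.card m = m.count e + Multiset.card (m.filter fun a => ¬ a = e) := by
  conv_lhs => rw [← Multiset.filter_add_not (fun a => a = e) m]
  rw [Multiset.card_add]
  congr 1
  rw [Multiset.count_eq_card_filter_eq]
  congr 1
  exact Multiset.filter_congr fun x _ => eq_comm

/-- For any partition in EO-bar, its conjugate is in EO-bar, and the even-odd crank
equals the number of odd parts of the conjugate minus the number of odd parts. -/
theorem stmt0 (n : ℕ) (p : Nat.Partition n) (h : EObar p.parts) :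
    EObar (conjugate p.parts) ∧
    eoc p.parts = (oddParts (conjugate p.parts) : ℤ) - oddParts p.parts := by
  obtain ⟨h1, h2⟩ := h
  set s := p.parts with hs
  have hpos : ∀ a ∈ s, 0 < a := fun a ha => p.parts_pos ha
  set M := sSup {a | a ∈ s} with hM
  set e := largestEven s with he
  set t := oddParts s with ht
  set c : ℕ → ℕ := fun i => Multiset.card (s.filter fun q => i < q) with hc
  have hc' : ∀ i, c i = Multiset.card (s.filter fun q => i < q) := fun i => rfl
  have ht' : t = Multiset.card (s.filter fun a => Odd a) := rfl
  have hfin : {a | a ∈ s}.Finite :=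
    Set.Finite.subset s.toFinset.finite_toSet fun a ha => Multiset.mem_toFinset.2 ha
  have hfinE : {a | a ∈ s ∧ Even a}.Finite := Set.Finite.subset hfin fun a ha => ha.1
  have h_le_M : ∀ a ∈ s, a ≤ M := fun a ha => le_csSup hfin.bddAbove ha
  have hE_le : ∀ a ∈ s, Even a → a ≤ e := fun a ha hae => le_csSup hfinE.bddAbove ⟨ha, hae⟩
  have he_cases : e = 0 ∨ (e ∈ s ∧ Even e) := by
    rcases Set.eq_empty_or_nonempty {a | a ∈ s ∧ Even a} with hE | hE
    · left
      rw [he, largestEven, hE]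
      simpa using csSup_empty
    · right; exact Nat.sSup_mem hE hfinE.bddAbove
  have he_even : Even e := by
    rcases he_cases with h0 | ⟨_, h0⟩
    · rw [h0]; exact Even.zero
    · exact h0
  have he_le_M : e ≤ M := by
    rcases he_cases with h0 | ⟨h0, _⟩
    · omega
    · exact h_le_M e h0
  have h_e_lt_odd : ∀ b ∈ s, Odd b → e < b := by
    intro b hb hbo
    rcases he_cases with h0 | ⟨h0, h0e⟩
    · have := hpos b hb; omega
    · exact h1 e h0 b hb h0e hbo
  have hcount_even : ∀ a ∈ s, a ≠ e → Even (s.count a) := by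
    intro a ha hae
    rw [← Nat.not_odd_iff_even]
    intro hodd
    exact hae ((h2 a ha).mp hodd)
  -- parity of conjugate parts
  have hc_parity : ∀ i, (Odd (c i) ↔ i < e) := by
    intro i
    have hsplit : c i = Multiset.card ((s.filter fun q => i < q).filter fun a => Odd a)
        + Multiset.card ((s.filter fun q => i < q).filter fun a => ¬ Odd a) := by
      rw [hc' i, ← Multiset.card_add, Multiset.filter_add_not]
    have hA : Even (Multiset.card ((s.filter fun q => i < q).filter fun a => Odd a)) := by
      apply even_card_of_counts
      intro a ha
      have has : a ∈ s := Multiset.mem_of_mem_filter (Multiset.mem_of_mem_filter ha)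
      have hao : Odd a := Multiset.of_mem_filter ha
      have hia : i < a := Multiset.of_mem_filter (Multiset.mem_of_mem_filter ha)
      rw [Multiset.count_filter, if_pos hao, Multiset.count_filter, if_pos hia]
      apply hcount_even a has
      intro hae
      rw [hae] at hao
      rw [← Nat.not_even_iff_odd] at hao
      exact hao he_even
    have hB : Odd (Multiset.card ((s.filter fun q => i < q).filter fun a => ¬ Odd a)) ↔
        i < e := by
      by_cases hie : i < e
      · have heE : e ∈ s ∧ Even e := by
          rcases he_cases with h0 | h0
          · omega
          · exact h0
        set m := (s.filter fun q => i < q).filter (fun a => ¬ Odd a) with hm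
        have hcm : m.count e = s.count e := by
          rw [hm, Multiset.count_filter, if_pos (Nat.not_odd_iff_even.2 heE.2),
            Multiset.count_filter, if_pos hie]
        have hrest : Even (Multiset.card (m.filter fun a => ¬ a = e)) := by
          apply even_card_of_counts
          intro a ha
          have ham : a ∈ m := Multiset.mem_of_mem_filter ha
          have hane : ¬ a = e := (Multiset.mem_filter.mp ha).2
          have has : a ∈ s := Multiset.mem_of_mem_filter (Multiset.mem_of_mem_filter ham)
          have hano : ¬ Odd a := (Multiset.mem_filter.mp ham).2
          have hia : i < a := Multiset.of_mem_filter (Multiset.mem_of_mem_filter ham)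
          rw [Multiset.count_filter, if_pos hane, hm, Multiset.count_filter,
            if_pos hano, Multiset.count_filter, if_pos hia]
          exact hcount_even a has hane
        have hcnt : Odd (s.count e) := (h2 e heE.1).mpr rfl
        have htot := card_eq_count_add m e
        rw [Nat.odd_iff] at hcnt ⊢
        rw [Nat.even_iff] at hrest
        constructor
        · intro _; exact hie
        · intro _; omega
      · have hzero : (s.filter fun q => i < q).filter (fun a => ¬ Odd a) = 0 := by
          rw [Multiset.filter_eq_nil]
          intro a ha hano
          have has : a ∈ s := Multiset.mem_of_mem_filter ha
          have hia : i < a := Multiset.of_mem_filter ha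
          have : a ≤ e := hE_le a has (Nat.not_odd_iff_even.1 hano)
          omega
        rw [hzero]
        simp only [Multiset.card_zero]
        constructor
        · intro hodd; exact absurd hodd (by decide)
        · intro hh; omega
    rw [Nat.odd_iff] at hB ⊢
    rw [Nat.even_iff] at hA
    omega
  have hc_anti : ∀ i j : ℕ, i ≤ j → c j ≤ c i := by
    intro i j hij
    rw [hc' i, hc' j]
    exact card_filter_mono s _ _ fun a _ hja => lt_of_le_of_lt hij hja
  have hcM : ∀ i, M ≤ i → c i = 0 := by
    intro i hMi
    rw [hc', Multiset.card_eq_zero, Multiset.filter_eq_nil]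
    intro a ha
    have := h_le_M a ha
    omega
  have hc_pos : ∀ i, i < M → 0 < c i := by
    intro i hi
    have hsne : {a | a ∈ s}.Nonempty := by
      rcases Set.eq_empty_or_nonempty {a | a ∈ s} with h0 | h0
      · exfalso
        have hM0 : M = 0 := by rw [hM, h0]; simpa using csSup_empty
        omega
      · exact h0
    have hMs : M ∈ s := Nat.sSup_mem hsne hfin.bddAbove
    rw [hc', Multiset.card_pos_iff_exists_mem]
    exact ⟨M, Multiset.mem_filter.2 ⟨hMs, hi⟩⟩
  have hce : c e = t := by
    rw [hc' e, ht']
    congr 1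
    apply Multiset.filter_congr
    intro a ha
    constructor
    · intro hea
      rcases Nat.even_or_odd a with hae | hao
      · have := hE_le a ha hae; omega
      · exact hao
    · intro hao
      exact h_e_lt_odd a ha hao
  have ht_le : t ≤ c 0 := by
    rw [ht', hc' 0]
    exact card_filter_mono s _ _ fun a ha hao => hpos a ha
  have hconj : conjugate s = (Multiset.range M).map c := rfl
  have hmem_conj : ∀ a, a ∈ conjugate s ↔ ∃ i, i < M ∧ c i = a := by
    intro a
    rw [hconj, Multiset.mem_map]
    constructor
    · rintro ⟨i, hi, rfl⟩; exact ⟨i, Multiset.mem_range.mp hi, rfl⟩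
    · rintro ⟨i, hi, rfl⟩; exact ⟨i, Multiset.mem_range.mpr hi, rfl⟩
  have hoc : oddParts (conjugate s) = e := by
    rw [oddParts, hconj, Multiset.filter_map, Multiset.card_map]
    have hcg : Multiset.filter ((fun a => Odd a) ∘ c) (Multiset.range M)
        = Multiset.filter (fun i => i < e) (Multiset.range M) := by
      apply Multiset.filter_congr
      intro i _
      simpa using hc_parity i
    rw [hcg]
    have hrv : Multiset.range M = (Finset.range M).val := rfl
    rw [hrv, ← Finset.filter_val]
    have hre : (Finset.range M).filter (fun i => i < e) = Finset.range e := by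
      ext i
      simp only [Finset.mem_filter, Finset.mem_range]
      omega
    rw [hre]
    simp
  set g : ℕ → ℕ := fun w => ((Finset.range M).filter fun i => w ≤ c i).card with hg
  have hgdef : ∀ w, g w = ((Finset.range M).filter fun i => w ≤ c i).card := fun _ => rfl
  have hg_mem : ∀ w i : ℕ, (i < M ∧ w ≤ c i) ↔ i < g w := by
    intro w i
    have hls := lowerSet_mem_iff ((Finset.range M).filter fun i => w ≤ c i)
      (by
        intro i j hij hj
        simp only [Finset.mem_filter, Finset.mem_range] at hj ⊢
        exact ⟨lt_of_le_of_lt hij hj.1, le_trans hj.2 (hc_anti i j hij)⟩) i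
    simp only [Finset.mem_filter, Finset.mem_range] at hls
    rw [hgdef w]
    exact hls
  have hg_part : ∀ w, 1 ≤ w → 1 ≤ g w → g w ∈ s ∧ w ≤ c (g w - 1) ∧ c (g w) < w := by
    intro w hw hgw
    have h1m : g w - 1 < g w := by omega
    obtain ⟨hlt, hle⟩ := (hg_mem w (g w - 1)).mpr h1m
    have hcu : c (g w) < w := by
      by_cases hgM : g w < M
      · have hiff := hg_mem w (g w)
        omega
      · have := hcM (g w) (by omega)
        omega
    refine ⟨?_, hle, hcu⟩
    by_contra hus
    have hfe : (s.filter fun q => g w - 1 < q) = s.filter fun q => g w < q := by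
      apply Multiset.filter_congr
      intro a ha
      have hane : a ≠ g w := fun hh => hus (hh ▸ ha)
      omega
    have hcc : c (g w - 1) = c (g w) := by rw [hc', hc', hfe]
    omega
  have hg_val : ∀ w, 1 ≤ w → (Odd (g w) ↔ w ≤ t) := by
    intro w hw
    by_cases hgw : 1 ≤ g w
    · obtain ⟨hus, hle, hcu⟩ := hg_part w hw hgw
      constructor
      · intro hodd
        calc w ≤ c (g w - 1) := hle
          _ ≤ t := by
            rw [ht', hc']
            apply card_filter_mono
            intro a ha hga
            rcases Nat.even_or_odd a with hae | hao
            · exfalso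
              have := h1 a ha (g w) hus hae hodd
              omega
            · exact hao
      · intro hwt
        rw [← Nat.not_even_iff_odd]
        intro heven
        have hct : t ≤ c (g w) := by
          rw [ht', hc']
          apply card_filter_mono
          intro a ha hao
          exact h1 (g w) hus a ha heven hao
        omega
    · have hgw0 : g w = 0 := by omega
      rw [hgw0]
      constructor
      · intro hodd; exact absurd hodd (by decide)
      · intro hwt
        exfalso
        by_cases hM0 : M = 0
        · have hc0 : c 0 = 0 := hcM 0 (by omega)
          omega
        · have := (hg_mem w 0).mp ⟨by omega, by omega⟩
          omega
  have hcount_conj : ∀ v, (conjugate s).count v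
      = ((Finset.range M).filter fun i => c i = v).card := by
    intro v
    rw [hconj, Multiset.count_map]
    have hrv : Multiset.range M = (Finset.range M).val := rfl
    rw [hrv]
    have hcg : Multiset.filter (fun a => v = c a) (Finset.range M).val
        = Multiset.filter (fun i => c i = v) (Finset.range M).val :=
      Multiset.filter_congr fun x _ => eq_comm
    rw [hcg, ← Finset.filter_val]
    rfl
  have hg_split : ∀ v, g v = ((Finset.range M).filter fun i => c i = v).card + g (v + 1) := by
    intro v
    have hun : (Finset.range M).filter (fun i => v ≤ c i)
        = ((Finset.range M).filter fun i => c i = v)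
          ∪ ((Finset.range M).filter fun i => v + 1 ≤ c i) := by
      ext i
      simp only [Finset.mem_filter, Finset.mem_union, Finset.mem_range]
      omega
    have hdis : Disjoint ((Finset.range M).filter fun i => c i = v)
        ((Finset.range M).filter fun i => v + 1 ≤ c i) := by
      rw [Finset.disjoint_left]
      intro a ha hb
      simp only [Finset.mem_filter] at ha hb
      omega
    rw [hgdef v, hgdef (v + 1), hun, Finset.card_union_of_disjoint hdis]
  have hfinC : {a | a ∈ conjugate s ∧ Even a}.Finite :=
    Set.Finite.subset (Set.Finite.subset (conjugate s).toFinset.finite_toSet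
      fun a ha => Multiset.mem_toFinset.2 ha) fun a ha => ha.1
  have hlec : largestEven (conjugate s) = t := by
    by_cases heM : e = M
    · have ht0 : t = 0 := by
        have hcet := hce
        have := hcM e (by omega)
        omega
      have hempty : {a | a ∈ conjugate s ∧ Even a} = ∅ := by
        ext a
        simp only [Set.mem_empty_iff_false, Set.mem_setOf_eq, iff_false, not_and]
        intro ha hae
        obtain ⟨i, hi, rfl⟩ := (hmem_conj a).mp ha
        have := (hc_parity i).mpr (by omega)
        rw [← Nat.not_even_iff_odd] at this
        exact this hae
      rw [largestEven, hempty, ht0]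
      simpa using csSup_empty
    · have heM' : e < M := by omega
      have hmemt : t ∈ conjugate s := by
        rw [hmem_conj]
        exact ⟨e, heM', hce⟩
      have hte : Even t := by
        rw [← hce, ← Nat.not_odd_iff_even]
        intro ho
        have := (hc_parity e).mp ho
        omega
      have hb : ∀ a ∈ {a | a ∈ conjugate s ∧ Even a}, a ≤ t := by
        rintro a ⟨ha, hae⟩
        obtain ⟨i, hi, rfl⟩ := (hmem_conj a).mp ha
        have hie : ¬ i < e := by
          intro hie
          have := (hc_parity i).mpr hie
          rw [← Nat.not_even_iff_odd] at this
          exact this hae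
        rw [← hce]
        exact hc_anti e i (by omega)
      rw [largestEven]
      apply le_antisymm
      · exact csSup_le ⟨t, hmemt, hte⟩ hb
      · exact le_csSup hfinC.bddAbove ⟨hmemt, hte⟩
  have hcond1 : ∀ a ∈ conjugate s, ∀ b ∈ conjugate s, Even a → Odd b → a < b := by
    intro a ha b hb hae hbo
    obtain ⟨i, hi, rfl⟩ := (hmem_conj a).mp ha
    obtain ⟨j, hj, rfl⟩ := (hmem_conj b).mp hb
    have hje : j < e := (hc_parity j).mp hbo
    have hie : ¬ i < e := by
      intro hh
      have := (hc_parity i).mpr hh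
      rw [← Nat.not_even_iff_odd] at this
      exact this hae
    have hle : c i ≤ c j := hc_anti j i (by omega)
    rcases lt_or_eq_of_le hle with hlt | heq
    · exact hlt
    · exfalso
      rw [heq] at hae
      rw [← Nat.not_even_iff_odd] at hbo
      exact hbo hae
  have hcond2 : ∀ v ∈ conjugate s,
      (Odd ((conjugate s).count v) ↔ v = largestEven (conjugate s)) := by
    intro v hv
    obtain ⟨i, hi, hiv⟩ := (hmem_conj v).mp hv
    have hv1 : 1 ≤ v := by
      have := hc_pos i hi
      omega
    rw [hlec, hcount_conj]
    have hsp := hg_split v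
    have h1v := hg_val v hv1
    have h2v := hg_val (v + 1) (by omega)
    rw [Nat.odd_iff] at h1v h2v ⊢
    omega
  refine ⟨⟨hcond1, hcond2⟩, ?_⟩
  rw [eoc, hoc, ← he, ← ht]
end

section
/- As formal power series, (ab;q)_∞/((a;q)_∞(b;q)_∞) = ∑_{m=0}^∞ ∑_{n=0}^∞ a^m b^n q^{mn}/((q;q)_m (q;q)_n). -/
open Finset PowerSeries

noncomputable instance (σ R : Type*) [TopologicalSpace R] :
    TopologicalSpace (MvPowerSeries σ R) :=
  inferInstanceAs (TopologicalSpace ((σ →₀ ℕ) → R))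

local notation "a" => (MvPowerSeries.X 0 : MvPowerSeries (Fin 3) ℤ)
local notation "b" => (MvPowerSeries.X 1 : MvPowerSeries (Fin 3) ℤ)
local notation "q" => (MvPowerSeries.X 2 : MvPowerSeries (Fin 3) ℤ)


namespace Stmt4Aux

open MvPowerSeries Filter

abbrev R3 := MvPowerSeries (Fin 3) ℤ

instance : T2Space R3 := inferInstanceAs (T2Space ((Fin 3 →₀ ℕ) → ℤ))
instance : T3Space R3 := inferInstanceAs (T3Space ((Fin 3 →₀ ℕ) → ℤ))
instance : ContinuousAdd R3 := inferInstanceAs (ContinuousAdd ((Fin 3 →₀ ℕ) → ℤ))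
instance : ContinuousNeg R3 := inferInstanceAs (ContinuousNeg ((Fin 3 →₀ ℕ) → ℤ))

instance : ContinuousMul R3 := by
  constructor
  apply continuous_pi
  intro d
  have : (fun p : R3 × R3 => (p.1 * p.2) d)
      = fun p => ∑ x ∈ Finset.HasAntidiagonal.antidiagonal d, p.1 x.1 * p.2 x.2 := by
    funext p
    exact coeff_mul d p.1 p.2
  rw [this]
  exact continuous_finset_sum _ fun x _ =>
    ((continuous_apply x.1).comp continuous_fst).mul ((continuous_apply x.2).comp continuous_snd)

instance : IsTopologicalRing R3 := { }

/-- Convergence of coefficients criterion. -/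
lemma tendsto_coeff {ι : Type*} {l : Filter ι} {F : ι → R3} {g : R3} :
    Tendsto F l (nhds g) ↔ ∀ d, ∀ᶠ i in l, coeff d (F i) = coeff d g := by
  rw [show Tendsto F l (nhds g) ↔ ∀ d, Tendsto (fun i => F i d) l (nhds (g d)) from tendsto_pi_nhds]
  refine forall_congr' fun d => ?_
  rw [show (nhds (g d) : Filter ℤ) = pure (g d) from nhds_discrete ℤ ▸ rfl]
  exact Filter.tendsto_pure

/-- `f` has all coefficients of `s`-degree `< N` vanishing. -/
def Pdeg (s : Fin 3) (N : ℕ) (f : R3) : Prop :=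
  ∀ d : Fin 3 →₀ ℕ, d s < N → coeff d f = 0

namespace Pdeg

variable {s : Fin 3} {M N : ℕ} {f g : R3}

lemma mono (h : Pdeg s N f) (hMN : M ≤ N) : Pdeg s M f :=
  fun d hd => h d (lt_of_lt_of_le hd hMN)

lemma add (hf : Pdeg s N f) (hg : Pdeg s N g) : Pdeg s N (f + g) := fun d hd => by
  rw [map_add, hf d hd, hg d hd, add_zero]

lemma mul_right (h : Pdeg s N f) (g : R3) : Pdeg s N (g * f) := by
  intro d hd
  rw [MvPowerSeries.coeff_mul]
  refine Finset.sum_eq_zero fun p hp => ?_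
  rw [Finset.HasAntidiagonal.mem_antidiagonal] at hp
  have h2 : p.2 s ≤ d s := by
    rw [← hp, Finsupp.add_apply]; omega
  rw [h p.2 (lt_of_le_of_lt h2 hd), mul_zero]

lemma mul_left (h : Pdeg s N f) (g : R3) : Pdeg s N (f * g) := by
  rw [mul_comm]; exact h.mul_right g

lemma mul_add (hf : Pdeg s M f) (hg : Pdeg s N g) : Pdeg s (M + N) (f * g) := by
  intro d hd
  rw [MvPowerSeries.coeff_mul]
  refine Finset.sum_eq_zero fun p hp => ?_
  rw [Finset.HasAntidiagonal.mem_antidiagonal] at hp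
  have h2 : p.1 s + p.2 s = d s := by rw [← hp, Finsupp.add_apply]
  rcases lt_or_ge (p.1 s) M with h1 | h1
  · rw [hf p.1 h1, zero_mul]
  · rw [hg p.2 (by omega), mul_zero]

lemma pow (h : Pdeg s 1 f) (m : ℕ) : Pdeg s m (f ^ m) := by
  induction m with
  | zero => exact fun d hd => absurd hd (by omega)
  | succ k ih => rw [pow_succ]; exact ih.mul_add h

lemma pow_ne_zero (h : Pdeg s N f) {m : ℕ} (hm : m ≠ 0) : Pdeg s N (f ^ m) := by
  obtain ⟨k, rfl⟩ := Nat.exists_eq_succ_of_ne_zero hm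
  rw [pow_succ]
  exact h.mul_right _

end Pdeg

lemma Pdeg_X_pow (s : Fin 3) (N : ℕ) : Pdeg s N ((X s : R3) ^ N) := by
  intro d hd
  rw [MvPowerSeries.X_pow_eq, MvPowerSeries.coeff_monomial, if_neg]
  intro hEq
  rw [hEq, Finsupp.single_eq_same] at hd
  omega

lemma Pdeg_X (s : Fin 3) : Pdeg s 1 (X s : R3) := by
  have := Pdeg_X_pow s 1
  rwa [pow_one] at this

lemma coeff_mul_eq_of_sub_one {N : ℕ} {v u : R3} (h : Pdeg 2 N (u - 1)) {d : Fin 3 →₀ ℕ}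
    (hd : d 2 < N) : coeff d (v * u) = coeff d v := by
  have hvu : v * u = v + v * (u - 1) := by ring
  rw [hvu, map_add, (h.mul_right v) d hd, add_zero]

lemma Pdeg_prod_sub_one {N : ℕ} {f : ℕ → R3} {t : Finset ℕ}
    (h : ∀ i ∈ t, Pdeg 2 N (f i - 1)) : Pdeg 2 N ((∏ i ∈ t, f i) - 1) := by
  classical
  induction t using Finset.induction with
  | empty =>
    intro d _
    simp
  | insert c t' hnotmem ih =>
    rw [Finset.prod_insert hnotmem]
    have h1 : f c * (∏ i ∈ t', f i) - 1
        = f c * ((∏ i ∈ t', f i) - 1) + (f c - 1) := by ring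
    rw [h1]
    exact ((ih fun i hi => h i (Finset.mem_insert_of_mem hi)).mul_right _).add
      (h c (Finset.mem_insert_self _ _))

lemma coeff_prod_partial {f : ℕ → R3} (h : ∀ j, Pdeg 2 j (f j - 1)) {d : Fin 3 →₀ ℕ} {N : ℕ}
    (hN : d 2 < N) {t : Finset ℕ} (ht : Finset.range N ⊆ t) :
    coeff d (∏ i ∈ t, f i) = coeff d (∏ i ∈ Finset.range N, f i) := by
  rw [← Finset.prod_sdiff ht, mul_comm]
  refine coeff_mul_eq_of_sub_one (Pdeg_prod_sub_one fun i hi => ?_) hN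
  rw [Finset.mem_sdiff, Finset.mem_range] at hi
  exact (h i).mono (by omega)

lemma hasProd_aux {f : ℕ → R3} (h : ∀ j, Pdeg 2 j (f j - 1)) :
    HasProd f (fun d => coeff d (∏ i ∈ Finset.range (d 2 + 1), f i)) := by
  have : Tendsto (fun t : Finset ℕ => ∏ i ∈ t, f i) atTop
      (nhds (fun d => coeff d (∏ i ∈ Finset.range (d 2 + 1), f i))) := by
    refine tendsto_coeff.2 ?_
    intro d
    rw [Filter.eventually_atTop]
    exact ⟨Finset.range (d 2 + 1), fun t ht =>
      (coeff_prod_partial h (Nat.lt_succ_self _) ht).trans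
        (MvPowerSeries.coeff_apply
          (fun d => coeff d (∏ i ∈ Finset.range (d 2 + 1), f i)) d).symm⟩
  exact this

lemma coeff_tprod {f : ℕ → R3} (h : ∀ j, Pdeg 2 j (f j - 1)) {d : Fin 3 →₀ ℕ} {N : ℕ}
    (hN : d 2 < N) :
    coeff d (∏' i, f i) = coeff d (∏ i ∈ Finset.range N, f i) := by
  rw [(hasProd_aux h).tprod_eq]
  exact (MvPowerSeries.coeff_apply _ d).trans (coeff_prod_partial h (Nat.lt_succ_self _)
    (Finset.range_subset_range.2 (by omega))).symm

lemma hasSum_aux {ι : Type*} (f : ι → R3)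
    (h : ∀ d, (Function.support fun i => coeff d (f i)).Finite) :
    HasSum f (fun d => ∑ᶠ i, coeff d (f i)) := by
  have : Tendsto (fun t : Finset ι => ∑ i ∈ t, f i) atTop
      (nhds (fun d => ∑ᶠ i, coeff d (f i))) := by
    refine tendsto_coeff.2 ?_
    intro d
    rw [Filter.eventually_atTop]
    refine ⟨(h d).toFinset, fun t ht => ?_⟩
    rw [map_sum]
    exact ((finsum_eq_finset_sum_of_support_subset _
      (fun i hi => ht ((h d).mem_toFinset.2 hi))).symm).trans
        (MvPowerSeries.coeff_apply (fun d => ∑ᶠ i, coeff d (f i)) d).symm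
  exact this

lemma hasSum_pdeg {s : Fin 3} {t : ℕ → R3} (h : ∀ m, Pdeg s m (t m)) :
    HasSum t (fun d => ∑ᶠ m, coeff d (t m)) :=
  hasSum_aux t fun d => Set.Finite.subset (Set.finite_Iic (d s)) (fun m hm => by
    rw [Set.mem_Iic]
    by_contra hc
    exact hm (h m d (by omega)))

lemma coeff_tsum_pdeg {s : Fin 3} {t : ℕ → R3} (h : ∀ m, Pdeg s m (t m)) (d : Fin 3 →₀ ℕ) :
    coeff d (∑' m, t m) = ∑ᶠ m, coeff d (t m) := by
  rw [(hasSum_pdeg h).tsum_eq]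
  exact MvPowerSeries.coeff_apply _ d

end Stmt4Aux
namespace Stmt4Aux

open MvPowerSeries Filter

noncomputable def poch (m : ℕ) : R3 := ∏ j ∈ Finset.range m, (1 - q ^ (j + 1))
noncomputable def ipoch (m : ℕ) : R3 := Ring.inverse (poch m)

lemma isUnit_poch (m : ℕ) : IsUnit (poch m) := by
  rw [MvPowerSeries.isUnit_iff_constantCoeff, poch, map_prod]
  have h1 : ∀ j ∈ Finset.range m,
      MvPowerSeries.constantCoeff (1 - q ^ (j + 1)) = 1 := by
    intro j _
    rw [map_sub, map_one, map_pow, MvPowerSeries.constantCoeff_X, zero_pow (Nat.succ_ne_zero j),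
      sub_zero]
  rw [Finset.prod_congr rfl h1, Finset.prod_const_one]
  exact isUnit_one

lemma poch_ipoch (m : ℕ) : poch m * ipoch m = 1 :=
  Ring.mul_inverse_cancel _ (isUnit_poch m)

lemma inv_unique {u v w : R3} (h1 : u * v = 1) (h2 : u * w = 1) : v = w := by
  calc v = v * (u * w) := by rw [h2, mul_one]
  _ = w * (u * v) := by ring
  _ = w := by rw [h1, mul_one]

lemma ipoch_zero : ipoch 0 = 1 := by
  rw [ipoch, poch, Finset.range_zero, Finset.prod_empty, Ring.inverse_one]

lemma ipoch_succ (m : ℕ) : (1 - q ^ (m + 1)) * ipoch (m + 1) = ipoch m := by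
  refine inv_unique (u := poch m) ?_ (poch_ipoch m)
  calc poch m * ((1 - q ^ (m + 1)) * ipoch (m + 1))
      = (poch m * (1 - q ^ (m + 1))) * ipoch (m + 1) := by ring
  _ = poch (m + 1) * ipoch (m + 1) := by rw [poch, poch, Finset.prod_range_succ]
  _ = 1 := poch_ipoch (m + 1)

noncomputable def Sser (x : R3) : R3 := ∑' m, x ^ m * ipoch m

lemma hasSum_S {s : Fin 3} {x : R3} (hx : Pdeg s 1 x) :
    HasSum (fun m => x ^ m * ipoch m) (Sser x) :=
  Summable.hasSum ⟨_, hasSum_pdeg (s := s) fun m => (hx.pow m).mul_left _⟩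

lemma euler_fe {s : Fin 3} {x : R3} (hx : Pdeg s 1 x) :
    Sser x - Sser (x * q) = x * Sser x := by
  have h1 := hasSum_S hx
  have h2 := hasSum_S (hx.mul_left q)
  have hd := h1.sub h2
  have h3 := h1.mul_left x
  have key : (fun m => (fun k => x ^ k * ipoch k - (x * q) ^ k * ipoch k) (m + 1))
      = fun m => x * (x ^ m * ipoch m) := by
    funext m
    have hmp : (x * q) ^ (m + 1) = x ^ (m + 1) * q ^ (m + 1) := mul_pow x q (m + 1)
    calc x ^ (m + 1) * ipoch (m + 1) - (x * q) ^ (m + 1) * ipoch (m + 1)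
        = x ^ (m + 1) * ((1 - q ^ (m + 1)) * ipoch (m + 1)) := by rw [hmp]; ring
    _ = x ^ (m + 1) * ipoch m := by rw [ipoch_succ]
    _ = x * (x ^ m * ipoch m) := by ring
  have h4 : HasSum (fun m => (fun k => x ^ k * ipoch k - (x * q) ^ k * ipoch k) (m + 1))
      (x * Sser x) := by rw [key]; exact h3
  have h5 := (hasSum_nat_add_iff (f := fun k => x ^ k * ipoch k - (x * q) ^ k * ipoch k) 1).mp h4
  have h6 := hd.unique h5
  simpa using h6

lemma euler_partial {s : Fin 3} {x : R3} (hx : Pdeg s 1 x) (N : ℕ) :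
    (∏ j ∈ Finset.range N, (1 - x * q ^ j)) * Sser x = Sser (x * q ^ N) := by
  induction N with
  | zero => simp
  | succ N ih =>
    have hx' : Pdeg s 1 (x * q ^ N) := hx.mul_left _
    have fe := euler_fe hx'
    have step : (1 - x * q ^ N) * Sser (x * q ^ N) = Sser (x * q ^ N * q) := by
      linear_combination fe
    calc (∏ j ∈ Finset.range (N + 1), (1 - x * q ^ j)) * Sser x
        = (1 - x * q ^ N) * ((∏ j ∈ Finset.range N, (1 - x * q ^ j)) * Sser x) := by
          rw [Finset.prod_range_succ]; ring
    _ = (1 - x * q ^ N) * Sser (x * q ^ N) := by rw [ih]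
    _ = Sser (x * q ^ N * q) := step
    _ = Sser (x * q ^ (N + 1)) := by rw [mul_assoc, ← pow_succ]

lemma tendsto_S_one {s : Fin 3} {x : R3} (hx : Pdeg s 1 x) :
    Tendsto (fun N => Sser (x * q ^ N)) atTop (nhds 1) := by
  rw [tendsto_coeff]
  intro d
  rw [Filter.eventually_atTop]
  refine ⟨d 2 + 1, fun N hN => ?_⟩
  have hx' : Pdeg s 1 (x * q ^ N) := hx.mul_left _
  rw [Sser, coeff_tsum_pdeg (s := s) (fun m => ((hx'.pow m).mul_left _)) d]
  rw [finsum_eq_single _ 0 ?_]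
  · simp [ipoch_zero]
  · intro m hm
    have h1 : Pdeg 2 N ((x * q ^ N) ^ m) :=
      (((Pdeg_X_pow 2 N).mul_right x)).pow_ne_zero hm
    exact (h1.mul_left _) d (by omega)

lemma euler {s : Fin 3} {x : R3} (hx : Pdeg s 1 x) :
    (∏' j, (1 - x * q ^ j)) * Sser x = 1 := by
  have hprod : ∀ j : ℕ, Pdeg 2 j ((1 - x * q ^ j) - 1) := by
    intro j d hd
    have he : (1 - x * q ^ j) - 1 = -(x * q ^ j) := by ring
    rw [he, map_neg, ((Pdeg_X_pow 2 j).mul_right x) d hd, neg_zero]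
  have hP := hasProd_aux hprod
  have t1 : Tendsto (fun N => (∏ j ∈ Finset.range N, (1 - x * q ^ j)) * Sser x) atTop
      (nhds ((∏' j, (1 - x * q ^ j)) * Sser x)) := by
    rw [hP.tprod_eq]
    exact hP.tendsto_prod_nat.mul_const _
  have t2 : Tendsto (fun N => (∏ j ∈ Finset.range N, (1 - x * q ^ j)) * Sser x) atTop
      (nhds 1) := by
    have := tendsto_S_one hx
    refine this.congr fun N => (euler_partial hx N).symm
  exact tendsto_nhds_unique t1 t2

end Stmt4Aux
namespace Stmt4Aux

open MvPowerSeries Filter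

noncomputable def pb (m : ℕ) : R3 := ∏ j ∈ Finset.range m, (1 - b * q ^ j)

lemma pb_succ (m : ℕ) : pb (m + 1) = pb m * (1 - b * q ^ m) := Finset.prod_range_succ _ _

lemma grec (m : ℕ) : (1 - q ^ (m + 1)) * (pb (m + 1) * ipoch (m + 1))
    = (1 - b * q ^ m) * (pb m * ipoch m) := by
  calc (1 - q ^ (m + 1)) * (pb (m + 1) * ipoch (m + 1))
      = pb (m + 1) * ((1 - q ^ (m + 1)) * ipoch (m + 1)) := by ring
  _ = pb (m + 1) * ipoch m := by rw [ipoch_succ]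
  _ = (1 - b * q ^ m) * (pb m * ipoch m) := by rw [pb_succ]; ring

noncomputable def Tser (y : R3) : R3 := ∑' m, y ^ m * (pb m * ipoch m)

lemma hasSum_T {s : Fin 3} {y : R3} (hy : Pdeg s 1 y) :
    HasSum (fun m => y ^ m * (pb m * ipoch m)) (Tser y) :=
  Summable.hasSum ⟨_, hasSum_pdeg (s := s) fun m => (hy.pow m).mul_left _⟩

lemma qbin_fe {s : Fin 3} {y : R3} (hy : Pdeg s 1 y) :
    Tser y - Tser (y * q) = y * Tser y - (y * b) * Tser (y * q) := by
  have h1 := hasSum_T hy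
  have h2 := hasSum_T (hy.mul_left q)
  have hd := h1.sub h2
  have h3 := (h1.mul_left y).sub (h2.mul_left (y * b))
  have key : (fun m => (fun k => y ^ k * (pb k * ipoch k) - (y * q) ^ k * (pb k * ipoch k)) (m + 1))
      = fun m => y * (y ^ m * (pb m * ipoch m)) - (y * b) * ((y * q) ^ m * (pb m * ipoch m)) := by
    funext m
    have hmp : (y * q) ^ (m + 1) = y ^ (m + 1) * q ^ (m + 1) := mul_pow y q (m + 1)
    have hmp2 : (y * q) ^ m = y ^ m * q ^ m := mul_pow y q m
    calc y ^ (m + 1) * (pb (m + 1) * ipoch (m + 1))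
          - (y * q) ^ (m + 1) * (pb (m + 1) * ipoch (m + 1))
        = y ^ (m + 1) * ((1 - q ^ (m + 1)) * (pb (m + 1) * ipoch (m + 1))) := by rw [hmp]; ring
    _ = y ^ (m + 1) * ((1 - b * q ^ m) * (pb m * ipoch m)) := by rw [grec]
    _ = y * (y ^ m * (pb m * ipoch m)) - (y * b) * ((y * q) ^ m * (pb m * ipoch m)) := by
        rw [hmp2]; ring
  have h4 : HasSum
      (fun m => (fun k => y ^ k * (pb k * ipoch k) - (y * q) ^ k * (pb k * ipoch k)) (m + 1))
      (y * Tser y - (y * b) * Tser (y * q)) := by rw [key]; exact h3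
  have h5 := (hasSum_nat_add_iff
    (f := fun k => y ^ k * (pb k * ipoch k) - (y * q) ^ k * (pb k * ipoch k)) 1).mp h4
  have h6 := hd.unique h5
  simpa using h6

lemma qbin_partial {s : Fin 3} {y : R3} (hy : Pdeg s 1 y) (N : ℕ) :
    (∏ j ∈ Finset.range N, (1 - y * q ^ j)) * Tser y
      = (∏ j ∈ Finset.range N, (1 - y * b * q ^ j)) * Tser (y * q ^ N) := by
  induction N with
  | zero => simp
  | succ N ih =>
    have hy' : Pdeg s 1 (y * q ^ N) := hy.mul_left _
    have fe := qbin_fe hy'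
    have step : (1 - y * q ^ N) * Tser (y * q ^ N)
        = (1 - y * q ^ N * b) * Tser (y * q ^ N * q) := by
      linear_combination fe
    calc (∏ j ∈ Finset.range (N + 1), (1 - y * q ^ j)) * Tser y
        = (1 - y * q ^ N) * ((∏ j ∈ Finset.range N, (1 - y * q ^ j)) * Tser y) := by
          rw [Finset.prod_range_succ]; ring
    _ = (1 - y * q ^ N) * ((∏ j ∈ Finset.range N, (1 - y * b * q ^ j)) * Tser (y * q ^ N)) := by
          rw [ih]
    _ = (∏ j ∈ Finset.range N, (1 - y * b * q ^ j))
          * ((1 - y * q ^ N * b) * Tser (y * q ^ N * q)) := by rw [← step]; ring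
    _ = (∏ j ∈ Finset.range (N + 1), (1 - y * b * q ^ j)) * Tser (y * q ^ (N + 1)) := by
          rw [Finset.prod_range_succ, mul_assoc y (q ^ N) q, ← pow_succ]; ring

lemma tendsto_T_one {s : Fin 3} {y : R3} (hy : Pdeg s 1 y) :
    Tendsto (fun N => Tser (y * q ^ N)) atTop (nhds 1) := by
  rw [tendsto_coeff]
  intro d
  rw [Filter.eventually_atTop]
  refine ⟨d 2 + 1, fun N hN => ?_⟩
  have hy' : Pdeg s 1 (y * q ^ N) := hy.mul_left _
  rw [Tser, coeff_tsum_pdeg (s := s) (fun m => ((hy'.pow m).mul_left _)) d]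
  rw [finsum_eq_single _ 0 ?_]
  · simp [ipoch_zero, pb]
  · intro m hm
    have h1 : Pdeg 2 N ((y * q ^ N) ^ m) :=
      (((Pdeg_X_pow 2 N).mul_right y)).pow_ne_zero hm
    exact (h1.mul_left _) d (by omega)

lemma qbin {s : Fin 3} {y : R3} (hy : Pdeg s 1 y) :
    (∏' j, (1 - y * q ^ j)) * Tser y = ∏' j, (1 - y * b * q ^ j) := by
  have hprod : ∀ z : R3, ∀ j : ℕ, Pdeg 2 j ((1 - z * q ^ j) - 1) := by
    intro z j d hd
    have he : (1 - z * q ^ j) - 1 = -(z * q ^ j) := by ring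
    rw [he, map_neg, ((Pdeg_X_pow 2 j).mul_right z) d hd, neg_zero]
  have hP := hasProd_aux (hprod y)
  have hQ := hasProd_aux (hprod (y * b))
  have t1 : Tendsto (fun N => (∏ j ∈ Finset.range N, (1 - y * q ^ j)) * Tser y) atTop
      (nhds ((∏' j, (1 - y * q ^ j)) * Tser y)) := by
    rw [hP.tprod_eq]
    exact hP.tendsto_prod_nat.mul_const _
  have t2 : Tendsto (fun N => (∏ j ∈ Finset.range N, (1 - y * b * q ^ j)) * Tser (y * q ^ N))
      atTop (nhds ((∏' j, (1 - y * b * q ^ j)) * 1)) := by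
    rw [hQ.tprod_eq]
    exact hQ.tendsto_prod_nat.mul (tendsto_T_one hy)
  rw [← mul_one (∏' j, (1 - y * b * q ^ j))]
  exact tendsto_nhds_unique (t1.congr fun N => qbin_partial hy N) t2

end Stmt4Aux
namespace Stmt4Aux

open MvPowerSeries Filter

lemma coeff_mul_congr {d : Fin 3 →₀ ℕ} {u u' : R3} (v : R3)
    (h : ∀ e : Fin 3 →₀ ℕ, e 2 ≤ d 2 → coeff e u = coeff e u') :
    coeff d (v * u) = coeff d (v * u') := by
  rw [MvPowerSeries.coeff_mul, MvPowerSeries.coeff_mul]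
  refine Finset.sum_congr rfl fun p hp => ?_
  rw [Finset.HasAntidiagonal.mem_antidiagonal] at hp
  have h2 : p.2 2 ≤ d 2 := by rw [← hp, Finsupp.add_apply]; omega
  rw [h p.2 h2]

noncomputable def tailb (m : ℕ) : R3 := ∏' j, (1 - b * q ^ (m + j))

lemma htail (m : ℕ) : ∀ j : ℕ, Pdeg 2 j ((1 - b * q ^ (m + j)) - 1) := by
  intro j d hd
  have he : (1 - b * q ^ (m + j)) - 1 = -(b * q ^ (m + j)) := by ring
  rw [he, map_neg, (((Pdeg_X_pow 2 (m + j)).mono (by omega)).mul_right b) d hd, neg_zero]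

lemma tail_succ (m : ℕ) : tailb m = (1 - b * q ^ m) * tailb (m + 1) := by
  refine MvPowerSeries.ext fun d => ?_
  have hL : coeff d (tailb m)
      = coeff d (∏ j ∈ Finset.range (d 2 + 2), (1 - b * q ^ (m + j))) :=
    coeff_tprod (htail m) (by omega)
  have hR : coeff d ((1 - b * q ^ m) * tailb (m + 1))
      = coeff d ((1 - b * q ^ m)
          * ∏ j ∈ Finset.range (d 2 + 1), (1 - b * q ^ (m + 1 + j))) := by
    refine coeff_mul_congr _ fun e he => ?_
    exact coeff_tprod (htail (m + 1)) (by omega)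
  rw [hL, hR]
  congr 1
  rw [Finset.prod_range_succ']
  have h1 : ∀ j, m + (j + 1) = m + 1 + j := by omega
  have h2 : (∏ j ∈ Finset.range (d 2 + 1), (1 - b * q ^ (m + (j + 1))))
      = ∏ j ∈ Finset.range (d 2 + 1), (1 - b * q ^ (m + 1 + j)) := by
    refine Finset.prod_congr rfl fun j _ => by rw [h1 j]
  rw [h2, add_zero, mul_comm]

lemma Bsplit (m : ℕ) : (∏' j, (1 - b * q ^ j)) = pb m * tailb m := by
  induction m with
  | zero =>
    rw [pb, Finset.range_zero, Finset.prod_empty, one_mul, tailb]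
    exact tprod_congr fun j => by rw [zero_add]
  | succ m ih =>
    rw [ih, tail_succ m, pb_succ]
    ring

lemma Ring_inverse_eq {u v : R3} (h : u * v = 1) : Ring.inverse u = v := by
  have hu : IsUnit u := IsUnit.of_mul_eq_one _ h
  calc Ring.inverse u = Ring.inverse u * (u * v) := by rw [h, mul_one]
  _ = (Ring.inverse u * u) * v := by ring
  _ = v := by rw [Ring.inverse_mul_cancel _ hu, one_mul]

noncomputable def Fterm (mn : ℕ × ℕ) : R3 :=
  a ^ mn.1 * b ^ mn.2 * q ^ (mn.1 * mn.2)
    * Ring.inverse (∏ j ∈ Finset.range mn.1, (1 - q ^ (j + 1)))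
    * Ring.inverse (∏ j ∈ Finset.range mn.2, (1 - q ^ (j + 1)))

lemma Fterm_eq (mn : ℕ × ℕ) :
    Fterm mn = a ^ mn.1 * b ^ mn.2 * q ^ (mn.1 * mn.2) * ipoch mn.1 * ipoch mn.2 := rfl

lemma hasSum_F : Summable Fterm := by
  refine ⟨_, hasSum_aux Fterm fun d => ?_⟩
  refine Set.Finite.subset ((Set.finite_Iic (d 0)).prod (Set.finite_Iic (d 1)))
    fun mn hmn => ?_
  rw [Set.mem_prod, Set.mem_Iic, Set.mem_Iic]
  constructor
  · by_contra hc
    have h1 : Pdeg 0 mn.1 (Fterm mn) := by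
      rw [Fterm_eq]
      exact (((((Pdeg_X 0).pow mn.1).mul_left _).mul_left _).mul_left _).mul_left _
    exact hmn (h1 d (by omega))
  · by_contra hc
    have heq : Fterm mn = b ^ mn.2
        * (a ^ mn.1 * q ^ (mn.1 * mn.2) * ipoch mn.1 * ipoch mn.2) := by
      rw [Fterm_eq]; ring
    have h1 : Pdeg 1 mn.2 (Fterm mn) := by
      rw [heq]
      exact ((Pdeg_X 1).pow mn.2).mul_left _
    exact hmn (h1 d (by omega))

theorem main :
    (∏' j : ℕ, (1 - a * b * q ^ j)) *
        Ring.inverse (∏' j : ℕ, (1 - a * q ^ j)) *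
        Ring.inverse (∏' j : ℕ, (1 - b * q ^ j))
      = ∑' mn : ℕ × ℕ, Fterm mn := by
  have hxa : Pdeg 0 1 a := Pdeg_X 0
  have hxb : Pdeg 1 1 b := Pdeg_X 1
  have hA : (∏' j, (1 - a * q ^ j)) * Sser a = 1 := euler hxa
  have hB : (∏' j, (1 - b * q ^ j)) * Sser b = 1 := euler hxb
  have hQB : (∏' j, (1 - a * q ^ j)) * Tser a = ∏' j, (1 - a * b * q ^ j) := qbin hxa
  -- fiberwise sums
  have hFib : ∀ m : ℕ, HasSum (fun n => Fterm (m, n)) (a ^ m * ipoch m * Sser (b * q ^ m)) := by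
    intro m
    have hS := hasSum_S (s := 1) (hxb.mul_left (q ^ m))
    have h2 := hS.mul_left (a ^ m * ipoch m)
    have heq : (fun n => a ^ m * ipoch m * ((b * q ^ m) ^ n * ipoch n))
        = fun n => Fterm (m, n) := by
      funext n
      rw [Fterm_eq]
      have : (b * q ^ m) ^ n = b ^ n * q ^ (m * n) := by
        rw [mul_pow, ← pow_mul]
      rw [this]
      ring_nf
    rwa [heq] at h2
  have hG : HasSum (fun m => a ^ m * ipoch m * Sser (b * q ^ m)) (∑' mn, Fterm mn) :=
    HasSum.prod_fiberwise hasSum_F.hasSum hFib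
  have hG2 := hG.mul_right (∏' j, (1 - b * q ^ j))
  have hterm : (fun m => a ^ m * ipoch m * Sser (b * q ^ m) * (∏' j, (1 - b * q ^ j)))
      = fun m => a ^ m * (pb m * ipoch m) := by
    funext m
    have e1 : (∏' j, (1 - (b * q ^ m) * q ^ j)) = tailb m :=
      tprod_congr fun j => by rw [mul_assoc, ← pow_add]
    have hE := euler (s := 1) (hxb.mul_left (q ^ m))
    rw [e1] at hE
    rw [Bsplit m]
    calc a ^ m * ipoch m * Sser (b * q ^ m) * (pb m * tailb m)
        = a ^ m * (pb m * ipoch m) * (tailb m * Sser (b * q ^ m)) := by ring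
    _ = a ^ m * (pb m * ipoch m) := by rw [hE, mul_one]
  rw [hterm] at hG2
  have hTA : HasSum (fun m => a ^ m * (pb m * ipoch m)) (Tser a) := hasSum_T hxa
  have key : Tser a = (∑' mn, Fterm mn) * (∏' j, (1 - b * q ^ j)) := hTA.unique hG2
  have hAB : (∏' j, (1 - a * q ^ j)) * ((∑' mn, Fterm mn) * (∏' j, (1 - b * q ^ j)))
      = ∏' j, (1 - a * b * q ^ j) := by rw [← key]; exact hQB
  rw [Ring_inverse_eq hA, Ring_inverse_eq hB, ← hAB]
  linear_combination ((∑' mn, Fterm mn) * (∏' j, (1 - b * q ^ j)) * Sser b) * hA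
    + (∑' mn, Fterm mn) * hB

end Stmt4Aux

/-- `(ab;q)_∞/((a;q)_∞(b;q)_∞) = ∑_{m,n≥0} aᵐ bⁿ q^{mn}/((q;q)_m (q;q)_n)`,
as formal power series in the three variables a, b, q. -/
theorem stmt4 :
    (∏' j : ℕ, (1 - a * b * q^j)) *
        Ring.inverse (∏' j : ℕ, (1 - a * q^j)) *
        Ring.inverse (∏' j : ℕ, (1 - b * q^j))
      = ∑' mn : ℕ × ℕ,
          a ^ mn.1 * b ^ mn.2 * q^(mn.1*mn.2) *
            Ring.inverse (∏ j ∈ Finset.range mn.1, (1 - q^(j+1))) *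
            Ring.inverse (∏ j ∈ Finset.range mn.2, (1 - q^(j+1))) := Stmt4Aux.main
end

section
/- For any n ≥ 0, N_eo(0,4,4n+2) = 0 and N_eo(2,4,4n+4) = 0; i.e., every partition λ in EO-bar satisfies eoc(λ) ≡ |λ| (mod 4). -/
open Finset PowerSeries

lemma largestEven_even (s : Multiset ℕ) : Even (largestEven s) := by
  unfold largestEven
  by_cases h : {a | a ∈ s ∧ Even a}.Nonempty
  · have hfin : {a | a ∈ s ∧ Even a}.Finite :=
      s.finite_toSet.subset (fun a ha => ha.1)
    exact (h.csSup_mem hfin).2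
  · rw [Set.not_nonempty_iff_eq_empty.mp h, csSup_empty]
    simp

lemma largestEven_mem_or_zero (s : Multiset ℕ) :
    largestEven s ∈ s ∨ largestEven s = 0 := by
  unfold largestEven
  by_cases h : {a | a ∈ s ∧ Even a}.Nonempty
  · have hfin : {a | a ∈ s ∧ Even a}.Finite :=
      s.finite_toSet.subset (fun a ha => ha.1)
    exact Or.inl (h.csSup_mem hfin).1
  · rw [Set.not_nonempty_iff_eq_empty.mp h, csSup_empty]
    simp

lemma oddParts_eq_sum (s : Multiset ℕ) :
    oddParts s = ∑ a ∈ s.toFinset, if Odd a then s.count a else 0 := by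
  unfold oddParts
  rw [← Multiset.toFinset_sum_count_eq, Multiset.toFinset_filter, Finset.sum_filter]
  congr 1
  ext a
  split_ifs with h
  · rw [Multiset.count_filter, if_pos h]
  · rfl

lemma sum_eq_sum (s : Multiset ℕ) :
    s.sum = ∑ a ∈ s.toFinset, s.count a * a := by
  conv_lhs => rw [← Multiset.map_id s]
  rw [Finset.sum_multiset_map_count]
  simp [smul_eq_mul]

lemma count_even_of_ne (s : Multiset ℕ) (hs : EObar s) {a : ℕ} (ham : a ∈ s)
    (hne : a ≠ largestEven s) : Even (s.count a) :=
  Nat.not_odd_iff_even.mp (fun ho => hne ((hs.2 a ham).mp ho))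

lemma oddParts_even (s : Multiset ℕ) (hs : EObar s) : Even (oddParts s) := by
  rw [oddParts_eq_sum, even_iff_two_dvd]
  apply Finset.dvd_sum
  intro a ha
  split_ifs with h
  · have hne : a ≠ largestEven s := fun he =>
      (Nat.not_odd_iff_even.mpr (he ▸ largestEven_even s)) h
    exact even_iff_two_dvd.mp (count_even_of_ne s hs (Multiset.mem_toFinset.mp ha) hne)
  · exact dvd_zero 2

lemma eobar_sum_mod (s : Multiset ℕ) (hs : EObar s) :
    ((s.sum : ZMod 4)) = (largestEven s : ZMod 4) + (oddParts s : ZMod 4) := by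
  classical
  have h4 : (4 : ZMod 4) = 0 := rfl
  set L := largestEven s with hL
  have hLe : Even L := largestEven_even s
  have key : ∀ a ∈ s.toFinset,
      ((s.count a * a : ℕ) : ZMod 4) =
        (if a = L then (L : ZMod 4) else 0) + (if Odd a then ((s.count a : ℕ) : ZMod 4) else 0) := by
    intro a ha
    have ham := Multiset.mem_toFinset.mp ha
    by_cases haL : a = L
    · obtain ⟨k, hk⟩ := (hs.2 a ham).mpr haL
      obtain ⟨m, hm⟩ := hLe
      have hnodd : ¬ Odd a := by rw [haL]; exact Nat.not_odd_iff_even.mpr ⟨m, hm⟩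
      rw [if_pos haL, if_neg hnodd, add_zero, hk, haL, hm]
      push_cast
      linear_combination ((k : ZMod 4) * m) * h4
    · obtain ⟨k, hk⟩ := count_even_of_ne s hs ham haL
      rw [if_neg haL, hk, zero_add]
      by_cases hao : Odd a
      · obtain ⟨m, hm⟩ := id hao
        rw [if_pos hao, hm]
        push_cast
        linear_combination ((k : ZMod 4) * m) * h4
      · obtain ⟨m, hm⟩ := Nat.not_odd_iff_even.mp hao
        rw [if_neg hao, hm]
        push_cast
        linear_combination ((k : ZMod 4) * m) * h4
  have h1 : ((s.sum : ℕ) : ZMod 4)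
      = ∑ a ∈ s.toFinset, ((s.count a * a : ℕ) : ZMod 4) := by
    rw [sum_eq_sum]; push_cast; rfl
  rw [h1, Finset.sum_congr rfl key, Finset.sum_add_distrib]
  congr 1
  · rw [Finset.sum_ite_eq' s.toFinset L (fun _ => (L : ZMod 4))]
    rcases largestEven_mem_or_zero s with h | h
    · rw [if_pos (Multiset.mem_toFinset.mpr h)]
    · rw [hL, h]; simp
  · rw [oddParts_eq_sum, Nat.cast_sum]
    exact Finset.sum_congr rfl (fun a _ => by split_ifs <;> simp)

lemma eoc_mod (s : Multiset ℕ) (hs : EObar s) :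
    ((eoc s : ZMod 4)) = ((s.sum : ℕ) : ZMod 4) := by
  have h4 : (4 : ZMod 4) = 0 := rfl
  obtain ⟨k, hk⟩ := oddParts_even s hs
  rw [eobar_sum_mod s hs]
  unfold eoc
  push_cast
  rw [hk]
  push_cast
  linear_combination (-(k : ZMod 4)) * h4

/-- N_eo(0,4,4n+2) = 0 and N_eo(2,4,4n+4) = 0; equivalently every partition in EO-bar
satisfies eoc(λ) ≡ |λ| (mod 4). -/
theorem stmt6 :
    (∀ n : ℕ, Neo 0 4 (4*n+2) = 0 ∧ Neo 2 4 (4*n+4) = 0) ∧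
    (∀ (N : ℕ) (p : Nat.Partition N), EObar p.parts → eoc p.parts ≡ (N : ℤ) [ZMOD 4]) := by
  have main : ∀ (N : ℕ) (p : Nat.Partition N), EObar p.parts →
      eoc p.parts ≡ (N : ℤ) [ZMOD 4] := by
    intro N p hp
    have h1 : ((eoc p.parts : ZMod 4)) = (((N : ℤ)) : ZMod 4) := by
      rw [eoc_mod p.parts hp, p.parts_sum]
      push_cast
      ring
    have h2 := (ZMod.intCast_eq_intCast_iff (eoc p.parts) ((N : ℤ)) 4).mp h1
    exact_mod_cast h2
  refine ⟨fun n => ⟨?_, ?_⟩, main⟩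
  · unfold Neo
    convert Set.ncard_empty (Nat.Partition (4*n+2))
    ext p
    simp only [Set.mem_setOf_eq, Set.mem_empty_iff_false, iff_false, not_and]
    intro hp h2
    have h3 := main (4*n+2) p hp
    have h2' : eoc p.parts ≡ 0 [ZMOD 4] := by exact_mod_cast h2
    have h4 : (0 : ℤ) % 4 = ((4*n+2 : ℕ) : ℤ) % 4 := h2'.symm.trans h3
    push_cast at h4
    omega
  · unfold Neo
    convert Set.ncard_empty (Nat.Partition (4*n+4))
    ext p
    simp only [Set.mem_setOf_eq, Set.mem_empty_iff_false, iff_false, not_and]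
    intro hp h2
    have h3 := main (4*n+4) p hp
    have h2' : eoc p.parts ≡ 2 [ZMOD 4] := by exact_mod_cast h2
    have h4 : (2 : ℤ) % 4 = ((4*n+4 : ℕ) : ℤ) % 4 := h2'.symm.trans h3
    push_cast at h4
    omega
end

section
/- There is a bijection between partitions of n+1 in EO²(the set of partitions where every even part is less than each odd part and only the smallest odd part appears an odd number of times) and partitions of n in EO-bar; consequently EO²(n+1) = EO-bar(n) for all n ≥ 0. -/
open Finset PowerSeries

namespace Stmt10Aux
open Multiset

lemma bddAbove_mem (t : Multiset ℕ) (P : ℕ → Prop) : BddAbove {a | a ∈ t ∧ P a} :=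
  (Set.Finite.subset t.toFinset.finite_toSet (fun a ha => by simpa using ha.1)).bddAbove

lemma smallestOdd_spec {s : Multiset ℕ} (h : ∃ a ∈ s, Odd a) :
    smallestOdd s ∈ s ∧ Odd (smallestOdd s) ∧ ∀ a ∈ s, Odd a → smallestOdd s ≤ a := by
  obtain ⟨a, ha, hoa⟩ := h
  have hm := Nat.sInf_mem (⟨a, ha, hoa⟩ : {b | b ∈ s ∧ Odd b}.Nonempty)
  exact ⟨hm.1, hm.2, fun b hb hob => Nat.sInf_le ⟨hb, hob⟩⟩

lemma largestEven_spec {t : Multiset ℕ} (h : ∃ a ∈ t, Even a) :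
    largestEven t ∈ t ∧ Even (largestEven t) ∧ ∀ a ∈ t, Even a → a ≤ largestEven t := by
  obtain ⟨a, ha, hea⟩ := h
  have hm := Nat.sSup_mem (⟨a, ha, hea⟩ : {b | b ∈ t ∧ Even b}.Nonempty) (bddAbove_mem t Even)
  exact ⟨hm.1, hm.2, fun b hb heb => le_csSup (bddAbove_mem t Even) ⟨hb, heb⟩⟩

lemma largestEven_eq_zero {t : Multiset ℕ} (h : ¬ ∃ a ∈ t, Even a) : largestEven t = 0 := by
  have he : {a | a ∈ t ∧ Even a} = ∅ := by
    ext a; simp only [Set.mem_setOf_eq, Set.mem_empty_iff_false, iff_false]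
    exact fun ha => h ⟨a, ha.1, ha.2⟩
  rw [largestEven, he, csSup_empty]; rfl

lemma largestEven_eq {t : Multiset ℕ} {e : ℕ} (he : e ∈ t) (hee : Even e)
    (hub : ∀ a ∈ t, Even a → a ≤ e) : largestEven t = e :=
  le_antisymm (csSup_le ⟨e, he, hee⟩ (fun a ha => hub a ha.1 ha.2))
    (le_csSup (bddAbove_mem t Even) ⟨he, hee⟩)

lemma smallestOdd_eq {t : Multiset ℕ} {m : ℕ} (hm : m ∈ t) (hom : Odd m)
    (hlb : ∀ a ∈ t, Odd a → m ≤ a) : smallestOdd t = m :=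
  le_antisymm (Nat.sInf_le ⟨hm, hom⟩) (le_csInf ⟨m, hm, hom⟩ (fun a ha => hlb a ha.1 ha.2))

noncomputable def fwd (s : Multiset ℕ) : Multiset ℕ :=
  ((s.erase (smallestOdd s)) + {smallestOdd s - 1}).filter (· ≠ 0)

noncomputable def bwd (t : Multiset ℕ) : Multiset ℕ :=
  t.erase (largestEven t) + {largestEven t + 1}

lemma count_fwd (s : Multiset ℕ) {a : ℕ} (ha : a ≠ 0) :
    (fwd s).count a = s.count a - (if a = smallestOdd s then 1 else 0)
      + (if a = smallestOdd s - 1 then 1 else 0) := by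
  rw [fwd, count_filter, if_pos ha, count_add, count_singleton]
  by_cases h : a = smallestOdd s
  · subst h; rw [count_erase_self, if_pos rfl]
  · rw [count_erase_of_ne h, if_neg h]; omega

lemma count_bwd (t : Multiset ℕ) (a : ℕ) :
    (bwd t).count a = t.count a - (if a = largestEven t then 1 else 0)
      + (if a = largestEven t + 1 then 1 else 0) := by
  rw [bwd, count_add, count_singleton]
  by_cases h : a = largestEven t
  · subst h; rw [count_erase_self, if_pos rfl]
  · rw [count_erase_of_ne h, if_neg h]; omega

lemma mem_fwd {s : Multiset ℕ} {a : ℕ} (ha : a ∈ fwd s) :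
    a ≠ 0 ∧ (a ∈ s ∨ a = smallestOdd s - 1) := by
  rw [fwd, Multiset.mem_filter, Multiset.mem_add, Multiset.mem_singleton] at ha
  exact ⟨ha.2, ha.1.imp (fun h => mem_of_mem_erase h) id⟩

lemma mem_bwd {t : Multiset ℕ} {a : ℕ} (ha : a ∈ bwd t) :
    a ∈ t ∨ a = largestEven t + 1 := by
  rw [bwd, Multiset.mem_add, Multiset.mem_singleton] at ha
  exact ha.imp (fun h => mem_of_mem_erase h) id

lemma filter_ne_zero_sum (u : Multiset ℕ) : (Multiset.filter (· ≠ 0) u).sum = u.sum := by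
  conv_rhs => rw [← Multiset.filter_add_not (· ≠ 0) u]
  rw [Multiset.sum_add]
  have h0 : (Multiset.filter (fun a => ¬ a ≠ 0) u).sum = 0 :=
    Multiset.sum_eq_zero (fun x hx => by simpa using Multiset.of_mem_filter hx)
  omega

lemma fwd_spec {s : Multiset ℕ} (hpos : ∀ a ∈ s, 0 < a) (hs : EO2 s) :
    EObar (fwd s) ∧ (fwd s).sum + 1 = s.sum ∧ (∀ a ∈ fwd s, 0 < a) ∧
      largestEven (fwd s) = smallestOdd s - 1 := by
  obtain ⟨h1, h2, h3⟩ := hs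
  obtain ⟨hm, hom, hlb⟩ := smallestOdd_spec h2
  set m := smallestOdd s with hmdef
  have hm1 : 1 ≤ m := hom.pos
  have hpos' : ∀ a ∈ fwd s, 0 < a := fun a ha => Nat.pos_of_ne_zero (mem_fwd ha).1
  -- even members of fwd s are ≤ m - 1
  have hub : ∀ a ∈ fwd s, Even a → a ≤ m - 1 := by
    intro a ha hea
    rcases (mem_fwd ha).2 with h | h
    · have := h1 a h m hm hea hom; omega
    · omega
  -- odd members of fwd s are ≥ m
  have hlb' : ∀ b ∈ fwd s, Odd b → m ≤ b := by
    intro b hb hob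
    rcases (mem_fwd hb).2 with h | h
    · exact hlb b h hob
    · exfalso
      have : Even (m - 1) := Nat.Odd.sub_odd hom odd_one
      rw [h] at hob; exact (Nat.not_odd_iff_even.2 this) hob
  -- largest even of fwd s
  have hle : largestEven (fwd s) = m - 1 := by
    by_cases hm2 : m = 1
    · have hz : m - 1 = 0 := by omega
      rw [hz]
      apply largestEven_eq_zero
      rintro ⟨a, ha, hea⟩
      have := hub a ha hea
      have := hpos' a ha
      omega
    · apply largestEven_eq _ _ hub
      · rw [fwd, Multiset.mem_filter, Multiset.mem_add, Multiset.mem_singleton]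
        exact ⟨Or.inr rfl, by omega⟩
      · exact Nat.Odd.sub_odd hom odd_one
  refine ⟨⟨?_, ?_⟩, ?_, hpos', hle⟩
  · intro a ha b hb hea hob
    have := hub a ha hea
    have := hlb' b hb hob
    omega
  · intro a ha
    have ha0 : a ≠ 0 := (mem_fwd ha).1
    rw [count_fwd s ha0, hle, ← hmdef]
    have hcm : Odd (s.count m) := (h3 m hm).2 rfl
    have hcount1 : 1 ≤ s.count m := Multiset.one_le_count_iff_mem.2 hm
    have hne : ∀ b, b ≠ m → ¬ Odd (s.count b) := by
      intro b hbm hodd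
      have hmem : b ∈ s := by
        rw [← Multiset.count_pos]
        rcases hodd with ⟨k, hk⟩; omega
      exact hbm ((h3 b hmem).1 hodd)
    rw [Nat.odd_iff] at hcm
    by_cases h5 : a = m
    · subst h5
      rw [if_pos rfl, if_neg (by omega : ¬ (m = m - 1)), Nat.odd_iff]
      omega
    · have hA : ¬ Odd (s.count a) := hne a h5
      rw [Nat.odd_iff] at hA
      rw [if_neg h5, Nat.odd_iff]
      by_cases h4 : a = m - 1
      · rw [if_pos h4]; omega
      · rw [if_neg h4]; omega
  · -- sum
    rw [fwd, filter_ne_zero_sum, Multiset.sum_add, Multiset.sum_singleton, ← hmdef]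
    have := Multiset.cons_erase hm
    have hsum : s.sum = m + (s.erase m).sum := by
      conv_lhs => rw [← this]
      rw [Multiset.sum_cons]
    omega

lemma bwd_spec {t : Multiset ℕ} (hpos : ∀ a ∈ t, 0 < a) (ht : EObar t) :
    EO2 (bwd t) ∧ (bwd t).sum = t.sum + 1 ∧ (∀ a ∈ bwd t, 0 < a) ∧
      smallestOdd (bwd t) = largestEven t + 1 := by
  obtain ⟨h1, h2⟩ := ht
  set e := largestEven t with hedef
  have hE : (e ∈ t ∧ Even e ∧ ∀ a ∈ t, Even a → a ≤ e) ∨ (e = 0 ∧ ∀ a ∈ t, Odd a) := by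
    by_cases h : ∃ a ∈ t, Even a
    · exact Or.inl (largestEven_spec h)
    · refine Or.inr ⟨largestEven_eq_zero h, fun a ha => ?_⟩
      rw [← Nat.not_even_iff_odd]
      exact fun hea => h ⟨a, ha, hea⟩
  have hoe : Odd (e + 1) := by
    rcases hE with ⟨_, he, _⟩ | ⟨he, _⟩
    · exact Even.add_one he
    · rw [he]; exact odd_one
  have hmem1 : e + 1 ∈ bwd t := by
    rw [bwd, Multiset.mem_add, Multiset.mem_singleton]; exact Or.inr rfl
  -- odd parts of t exceed e
  have hodd_gt : ∀ b ∈ t, Odd b → e < b := by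
    intro b hb hob
    rcases hE with ⟨hmem, he, _⟩ | ⟨he, _⟩
    · exact h1 e hmem b hb he hob
    · rw [he]; exact hob.pos
  have hpos' : ∀ a ∈ bwd t, 0 < a := by
    intro a ha
    rcases mem_bwd ha with h | h
    · exact hpos a h
    · omega
  have hso : smallestOdd (bwd t) = e + 1 := by
    apply smallestOdd_eq hmem1 hoe
    intro a ha hoa
    rcases mem_bwd ha with h | h
    · have := hodd_gt a h hoa; omega
    · omega
  refine ⟨⟨?_, ⟨e + 1, hmem1, hoe⟩, ?_⟩, ?_, hpos', hso⟩
  · -- every even part below each odd part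
    intro a ha b hb hea hob
    have hane : a ≠ e + 1 := by
      intro h; rw [h] at hea; exact (Nat.not_even_iff_odd.2 hoe) hea
    have hat : a ∈ t := by rcases mem_bwd ha with h | h; exact h; exact absurd h hane
    have hale : a ≤ e := by
      rcases hE with ⟨_, _, hub⟩ | ⟨_, hallodd⟩
      · exact hub a hat hea
      · exact absurd hea (Nat.not_even_iff_odd.2 (hallodd a hat))
    rcases mem_bwd hb with h | h
    · have := hodd_gt b h hob; omega
    · omega
  · -- counts
    intro a ha
    rw [count_bwd, ← hedef, hso]
    have hne : ∀ b, b ≠ e → ¬ Odd (t.count b) := by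
      intro b hbe hodd
      have hmem : b ∈ t := by
        rw [← Multiset.count_pos]
        rcases hodd with ⟨k, hk⟩; omega
      exact hbe ((h2 b hmem).1 hodd)
    by_cases h5 : a = e + 1
    · have hA : ¬ Odd (t.count a) := hne a (by omega)
      rw [Nat.odd_iff] at hA
      rw [if_neg (by omega : ¬ (a = e)), if_pos h5, Nat.odd_iff]
      omega
    · by_cases h4 : a = e
      · have he0 : 0 < e := by rw [← h4]; exact hpos' a ha
        have het : e ∈ t := by
          rcases hE with ⟨hmem, _, _⟩ | ⟨hz, _⟩
          · exact hmem
          · omega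
        have hcount1 : 1 ≤ t.count e := Multiset.one_le_count_iff_mem.2 het
        have hce : Odd (t.count e) := (h2 e het).2 rfl
        rw [Nat.odd_iff] at hce
        rw [if_pos h4, if_neg h5, Nat.odd_iff]
        subst h4
        omega
      · have hA : ¬ Odd (t.count a) := hne a h4
        rw [Nat.odd_iff] at hA
        rw [if_neg h4, if_neg h5, Nat.odd_iff]
        omega
  · -- sum
    rw [bwd, Multiset.sum_add, Multiset.sum_singleton, ← hedef]
    rcases hE with ⟨hmem, _, _⟩ | ⟨hz, _⟩
    · have hsum : t.sum = e + (t.erase e).sum := by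
        conv_lhs => rw [← Multiset.cons_erase hmem]
        rw [Multiset.sum_cons]
      omega
    · have h0 : (0 : ℕ) ∉ t := fun h => by have := hpos 0 h; omega
      rw [hz, Multiset.erase_of_notMem h0]

lemma bwd_fwd {s : Multiset ℕ} (hpos : ∀ a ∈ s, 0 < a) (hs : EO2 s) : bwd (fwd s) = s := by
  obtain ⟨_, _, _, hle⟩ := fwd_spec hpos hs
  obtain ⟨hm, hom, _⟩ := smallestOdd_spec hs.2.1
  set m := smallestOdd s with hmdef
  have hm1 : 1 ≤ m := hom.pos
  have hcount1 : 1 ≤ s.count m := Multiset.one_le_count_iff_mem.2 hm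
  ext a
  rw [count_bwd, hle]
  have hs1 : m - 1 + 1 = m := by omega
  rw [hs1]
  by_cases ha : a = 0
  · subst ha
    have c1 : s.count 0 = 0 := Multiset.count_eq_zero.2 (fun h => by have := hpos 0 h; omega)
    have c2 : (fwd s).count 0 = 0 :=
      Multiset.count_eq_zero.2 (fun h => (mem_fwd h).1 rfl)
    rw [c1, c2, if_neg (by omega : ¬ (0 : ℕ) = m)]
    simp
  · rw [count_fwd s ha, ← hmdef]
    by_cases h5 : a = m
    · subst h5; split_ifs <;> omega
    · by_cases h4 : a = m - 1
      · subst h4; split_ifs <;> omega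
      · split_ifs <;> omega

lemma fwd_bwd {t : Multiset ℕ} (hpos : ∀ a ∈ t, 0 < a) (ht : EObar t) : fwd (bwd t) = t := by
  obtain ⟨_, _, hpos', hso⟩ := bwd_spec hpos ht
  set e := largestEven t with hedef
  have het : e ≠ 0 → e ∈ t := by
    intro h
    by_cases hex : ∃ a ∈ t, Even a
    · exact (largestEven_spec hex).1
    · exact absurd (largestEven_eq_zero hex) h
  ext a
  by_cases ha : a = 0
  · subst ha
    have c1 : t.count 0 = 0 := Multiset.count_eq_zero.2 (fun h => by have := hpos 0 h; omega)
    have c2 : (fwd (bwd t)).count 0 = 0 :=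
      Multiset.count_eq_zero.2 (fun h => (mem_fwd h).1 rfl)
    rw [c1, c2]
  · rw [count_fwd (bwd t) ha, hso, count_bwd, ← hedef]
    have hs1 : e + 1 - 1 = e := by omega
    rw [hs1]
    by_cases h5 : a = e + 1
    · subst h5; split_ifs <;> omega
    · by_cases h4 : a = e
      · subst h4
        have hcount1 : 1 ≤ t.count e := Multiset.one_le_count_iff_mem.2 (het ha)
        split_ifs <;> omega
      · split_ifs <;> omega

end Stmt10Aux

/-- There is a bijection between partitions of n+1 in EO² and partitions of n in EO-bar;
consequently EO²(n+1) = EO-bar(n). -/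
theorem stmt10 (n : ℕ) :
    Nonempty ({p : Nat.Partition (n+1) // EO2 p.parts} ≃ {p : Nat.Partition n // EObar p.parts})
      ∧ EO2Count (n+1) = EObarCount n := by
  have E : {p : Nat.Partition (n+1) // EO2 p.parts} ≃ {p : Nat.Partition n // EObar p.parts} :=
    { toFun := fun p =>
        ⟨⟨Stmt10Aux.fwd p.1.parts,
          fun {i} hi => (Stmt10Aux.fwd_spec (fun a ha => p.1.parts_pos ha) p.2).2.2.1 i hi,
          by
            have h := (Stmt10Aux.fwd_spec (fun a ha => p.1.parts_pos ha) p.2).2.1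
            have h2 := p.1.parts_sum
            omega⟩,
         (Stmt10Aux.fwd_spec (fun a ha => p.1.parts_pos ha) p.2).1⟩
      invFun := fun q =>
        ⟨⟨Stmt10Aux.bwd q.1.parts,
          fun {i} hi => (Stmt10Aux.bwd_spec (fun a ha => q.1.parts_pos ha) q.2).2.2.1 i hi,
          by
            have h := (Stmt10Aux.bwd_spec (fun a ha => q.1.parts_pos ha) q.2).2.1
            have h2 := q.1.parts_sum
            omega⟩,
         (Stmt10Aux.bwd_spec (fun a ha => q.1.parts_pos ha) q.2).1⟩
      left_inv := fun p =>
        Subtype.ext (Nat.Partition.ext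
          (Stmt10Aux.bwd_fwd (fun a ha => p.1.parts_pos ha) p.2))
      right_inv := fun q =>
        Subtype.ext (Nat.Partition.ext
          (Stmt10Aux.fwd_bwd (fun a ha => q.1.parts_pos ha) q.2)) }
  refine ⟨⟨E⟩, ?_⟩
  rw [EO2Count, EObarCount, ← Nat.card_coe_set_eq, ← Nat.card_coe_set_eq]
  exact Nat.card_congr E
end
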